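/- arXiv:1503.06610 — 2 statements merged into one kernel-verified Lean document; each statement's English description precedes it below -/
import Mathlib

section
/- Suppose a foldable word is reduced by a sequence S of (not necessarily adjacent) matchings pairing each position with a position of complementary letter, such that the set of pairs is non-crossing (pairs are properly nested). If positions i and i+1 carry complementary letters and S pairs i with some k < i and i+1 with some l > i+1, then the word obtained by deleting positions i and i+1 is still foldable. -/
/-! Reduction by deleting adjacent complementary pairs has the diamond property (an overlap
`a (c a) (c (c a))` reduces to `a` either way because `c` is involutive), so it is confluent and
deleting any adjacent complementary pair from a foldable word leaves a foldable word. A word with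
a non-crossing complementary matching is foldable: an innermost matched pair is adjacent, and
removing it leaves a non-crossing matching of the shorter word. -/

def RedStep {α : Type*} (c : α → α) (w w' : List α) : Prop :=
  ∃ (W₁ W₂ : List α) (a : α), w = W₁ ++ a :: c a :: W₂ ∧ w' = W₁ ++ W₂

def Foldable {α : Type*} (c : α → α) (w : List α) : Prop :=
  Relation.ReflTransGen (RedStep c) w []

def NCMatching {α : Type*} (c : α → α) (w : List α)
    (m : Fin w.length → Fin w.length) : Prop :=
  Function.Involutive m ∧ (∀ i, m i ≠ i) ∧
  (∀ i, w.get (m i) = c (w.get i)) ∧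
  ∀ i k : Fin w.length, ¬ (i < k ∧ k < m i ∧ m i < m k)

section

variable {α : Type*} {c : α → α}

namespace RedStep

theorem cancel (a : α) (w : List α) : RedStep c (a :: c a :: w) w :=
  ⟨[], w, a, rfl, rfl⟩

theorem cons {w w' : List α} (a : α) : RedStep c w w' → RedStep c (a :: w) (a :: w') :=
  fun ⟨W₁, W₂, b, hw, hw'⟩ => ⟨a :: W₁, W₂, b, by rw [hw]; rfl, by rw [hw']; rfl⟩

theorem not_nil (w : List α) : ¬ RedStep c [] w := by
  rintro ⟨W₁, W₂, a, h, -⟩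
  simp at h

theorem diamond_aux (hc : Function.Involutive c) :
    ∀ {L₁ L₂ L₃ L₄ : List α} {a b : α}, L₁ ++ a :: c a :: L₂ = L₃ ++ b :: c b :: L₄ →
      L₁ ++ L₂ = L₃ ++ L₄ ∨ ∃ L₅, RedStep c (L₁ ++ L₂) L₅ ∧ RedStep c (L₃ ++ L₄) L₅
  | [], _, [], _, _, _, H => by injections; subst_vars; simp
  | [], _, [_], _, _, _, H => by injections; subst_vars; simp [hc _]
  | [_], _, [], _, _, _, H => by injections; subst_vars; simp [hc _]
  | [], _, _ :: _ :: _, _, _, _, H => by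
    injections; subst_vars; exact .inr ⟨_, ⟨_, _, _, rfl, rfl⟩, cancel _ _⟩
  | _ :: _ :: _, _, [], _, _, _, H => by
    injections; subst_vars; exact .inr ⟨_, cancel _ _, ⟨_, _, _, rfl, rfl⟩⟩
  | x :: L₁, L₂, y :: L₃, L₄, a, b, H =>
    have ⟨hxy, H⟩ := List.cons.inj H
    match diamond_aux hc H with
    | .inl H => .inl (by simp [hxy, H])
    | .inr ⟨_, h₁, h₂⟩ => .inr ⟨_, h₁.cons x, by simpa [hxy] using h₂.cons y⟩

theorem diamond (hc : Function.Involutive c) {w w₁ w₂ : List α}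
    (h₁ : RedStep c w w₁) (h₂ : RedStep c w w₂) :
    w₁ = w₂ ∨ ∃ w₃, RedStep c w₁ w₃ ∧ RedStep c w₂ w₃ := by
  obtain ⟨L₁, L₂, a, rfl, rfl⟩ := h₁
  obtain ⟨L₃, L₄, b, H, rfl⟩ := h₂
  exact diamond_aux hc H

theorem take_append_drop {w : List α} {i : ℕ} (hi : i + 1 < w.length)
    (h : w[i + 1] = c w[i]) : RedStep c w (w.take i ++ w.drop (i + 2)) := by
  refine ⟨w.take i, w.drop (i + 2), w[i], ?_, rfl⟩
  rw [← h, ← List.drop_eq_getElem_cons hi, ← List.drop_eq_getElem_cons, List.take_append_drop]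

end RedStep

theorem Foldable.of_redStep (hc : Function.Involutive c) {w w' : List α}
    (hw : Foldable c w) (h : RedStep c w w') : Foldable c w' := by
  have hconfl : ∀ u u₁ u₂, RedStep c u u₁ → RedStep c u u₂ →
      ∃ v, Relation.ReflGen (RedStep c) u₁ v ∧ Relation.ReflTransGen (RedStep c) u₂ v := by
    intro u u₁ u₂ h₁ h₂
    rcases RedStep.diamond hc h₁ h₂ with rfl | ⟨v, h₁, h₂⟩
    · exact ⟨_, .refl, .refl⟩
    · exact ⟨v, .single h₁, .single h₂⟩
  obtain ⟨v, hv, hw'v⟩ := Relation.church_rosser hconfl hw (.single h)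
  rcases Relation.ReflTransGen.cases_head hv with rfl | ⟨_, h, -⟩
  · exact hw'v
  · exact (RedStep.not_nil _ h).elim

namespace NCMatching

variable {w : List α} {m : Fin w.length → Fin w.length}

theorem lt_of_lt_of_lt (hm : NCMatching c w m) {a b : Fin w.length} (hab : a < b)
    (hb : b < m a) : m b < m a :=
  lt_of_le_of_ne (not_lt.1 fun h => hm.2.2.2 a b ⟨hab, hb, h⟩)
    fun h => hab.ne (hm.1.injective h).symm

theorem exists_adjacent_of_lt (hm : NCMatching c w m) (x : Fin w.length) (hx : x < m x) :
    ∃ j, ∃ hj : j + 1 < w.length, m ⟨j, by omega⟩ = ⟨j + 1, hj⟩ := by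
  induction h : (m x).val - x.val using Nat.strong_induction_on generalizing x with
  | _ d ih =>
  have hy : x.val + 1 < w.length := by have := (m x).2; rw [Fin.lt_def] at hx; omega
  set y : Fin w.length := ⟨x + 1, hy⟩
  have hyv : y.val = x.val + 1 := rfl
  by_cases hmx : m x = y
  · exact ⟨x, hy, hmx⟩
  have hyx : y < m x := by rw [Fin.lt_def] at hx ⊢; have := Fin.val_ne_of_ne hmx; omega
  have hxy : x < y := Fin.lt_def.2 (Nat.lt_succ_self _)
  have hmy : m y < m x := hm.lt_of_lt_of_lt hxy hyx
  rcases lt_or_gt_of_ne (hm.2.1 y) with hy' | hy'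
  · -- then `m y < x < y < m x`, so the pair `(m y, y)` would cross `(x, m x)`
    have hmyx : m y < x := by
      have : m y ≠ x := fun h => hmx (by rw [← h, hm.1])
      rw [Fin.lt_def] at hy' ⊢; have := Fin.val_ne_of_ne this; omega
    have := hm.lt_of_lt_of_lt hmyx (by rwa [hm.1])
    rw [hm.1] at this
    exact absurd hyx this.not_gt
  · exact ih _ (by rw [Fin.lt_def] at hx hmy hy'; omega) y hy' rfl

theorem exists_adjacent (hm : NCMatching c w m) (hw : w ≠ []) :
    ∃ j, ∃ hj : j + 1 < w.length, m ⟨j, by omega⟩ = ⟨j + 1, hj⟩ := by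
  have h0 : 0 < w.length := List.length_pos_iff.2 hw
  refine hm.exists_adjacent_of_lt ⟨0, h0⟩ (Fin.lt_def.2 (Nat.pos_of_ne_zero fun h => ?_))
  exact hm.2.1 _ (Fin.ext h)

theorem comap {w' : List α} (hm : NCMatching c w m) (e : Fin w'.length → Fin w.length)
    (he : StrictMono e) (hget : ∀ t, w'.get t = w.get (e t))
    (hrange : ∀ t, m (e t) ∈ Set.range e) : ∃ m', NCMatching c w' m' := by
  choose f hf using hrange
  refine ⟨f, fun t => he.injective ?_, fun t h => hm.2.1 (e t) ?_, fun t => ?_,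
    fun p q ⟨h₁, h₂, h₃⟩ => hm.2.2.2 (e p) (e q) ⟨he h₁, ?_, ?_⟩⟩
  · rw [hf, hf, hm.1]
  · rw [← hf, h]
  · rw [hget, hget, hf, hm.2.2.1]
  · simpa [hf] using he h₂
  · simpa [hf] using he h₃

theorem exists_take_append_drop (hm : NCMatching c w m) {j : ℕ} (hj : j + 1 < w.length)
    (hmj : m ⟨j, by omega⟩ = ⟨j + 1, hj⟩) :
    ∃ m', NCMatching c (w.take j ++ w.drop (j + 2)) m' := by
  let e : Fin (w.take j ++ w.drop (j + 2)).length → Fin w.length := fun t =>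
    ⟨if t < j then t else t + 2, by have := t.2; simp at this; split_ifs <;> omega⟩
  have hmj' : m ⟨j + 1, hj⟩ = ⟨j, by omega⟩ := by rw [← hmj, hm.1]
  refine hm.comap e (fun a b h => ?_) (fun t => ?_) (fun t => ?_)
  · simp only [Fin.lt_def, e] at h ⊢; split_ifs <;> omega
  · have htake : (w.take j).length = j := by simp; omega
    simp only [List.get_eq_getElem, List.getElem_append, htake, e]
    split_ifs
    · exact List.getElem_take
    · simp only [List.getElem_drop]; congr 1; omega
  · have hmem_range : ∀ x : Fin w.length, x.val ≠ j → x.val ≠ j + 1 → x ∈ Set.range e :=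
      fun x h₁ h₂ =>
      ⟨⟨if x < j then x else x - 2, by have := x.2; simp only [List.length_append,
        List.length_take, List.length_drop]; split_ifs <;> omega⟩,
        Fin.ext (by simp only [e]; split_ifs <;> omega)⟩
    have het : (e t).val ≠ j ∧ (e t).val ≠ j + 1 := by simp only [e]; split_ifs <;> omega
    refine hmem_range _ (fun h => het.2 ?_) (fun h => het.1 ?_)
    · rw [← hm.1 (e t), show m (e t) = ⟨j, by omega⟩ from Fin.ext h, hmj]
    · rw [← hm.1 (e t), show m (e t) = ⟨j + 1, hj⟩ from Fin.ext h, hmj']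

theorem foldable (hm : NCMatching c w m) : Foldable c w := by
  induction h : w.length using Nat.strong_induction_on generalizing w with
  | _ n ih =>
  rcases eq_or_ne w [] with rfl | hw
  · exact .refl
  obtain ⟨j, hj, hmj⟩ := hm.exists_adjacent hw
  obtain ⟨m', hm'⟩ := hm.exists_take_append_drop hj hmj
  have hcomp : w[j + 1] = c w[j] := by simpa [hmj] using hm.2.2.1 ⟨j, by omega⟩
  exact .head (RedStep.take_append_drop hj hcomp) (ih _ (by simp; omega) hm' rfl)

end NCMatching

end

theorem foldable_delete_adjacent_general {α : Type*} (c : α → α)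
    (hinv : Function.Involutive c)
    (w : List α) (m : Fin w.length → Fin w.length) (hm : NCMatching c w m)
    (i : ℕ) (hi : i + 1 < w.length)
    (hcomp : w.get ⟨i + 1, hi⟩ = c (w.get ⟨i, Nat.lt_of_succ_lt hi⟩)) :
    Foldable c (w.take i ++ w.drop (i + 2)) :=
  hm.foldable.of_redStep hinv (RedStep.take_append_drop hi hcomp)

/-- If a word admits a perfect non-crossing complementary matching, positions i and i+1
carry complementary letters, and the matching pairs i with some k < i and i+1 with some
l > i+1, then the word obtained by deleting positions i and i+1 is still foldable. -/
theorem foldable_delete_adjacent {α : Type*} (c : α → α)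
    (hinv : Function.Involutive c) (hfp : ∀ a, c a ≠ a)
    (w : List α) (m : Fin w.length → Fin w.length) (hm : NCMatching c w m)
    (i : ℕ) (hi : i + 1 < w.length)
    (hcomp : w.get ⟨i + 1, hi⟩ = c (w.get ⟨i, Nat.lt_of_succ_lt hi⟩))
    (hk : (m ⟨i, Nat.lt_of_succ_lt hi⟩).val < i)
    (hl : i + 1 < (m ⟨i + 1, hi⟩).val) :
    Foldable c (w.take i ++ w.drop (i + 2)) :=
  foldable_delete_adjacent_general c hinv w m hm i hi hcomp
end

section
/- If a cyclic word (word considered up to cyclic rotation) admits some linearization that is foldable, then deleting any pair of adjacent complementary letters (adjacency taken cyclically) yields a cyclic word that again admits a foldable linearization. -/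
theorem FreeGroup.mk_rotate_eq_one_iff {β : Type*} (L : List (β × Bool)) (n : ℕ) :
    mk (L.rotate n) = 1 ↔ mk L = 1 := by
  conv_rhs => rw [← List.take_append_drop (n % L.length) L]
  rw [List.rotate_eq_drop_append_take_mod, ← mul_mk, ← mul_mk, mul_eq_one_comm]

section Orient

variable {α : Type*} [LinearOrder α] {c : α → α}

variable (c) in
/-- The letter `x` as a free generator or its inverse, the generator being the smaller of `x`
and `c x`. -/
noncomputable def orient (x : α) : α × Bool :=
  if x < c x then (x, true) else (c x, false)

variable (hinv : Function.Involutive c) (hfp : ∀ a, c a ≠ a)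
include hinv hfp

theorem orient_apply (x : α) : orient c (c x) = ((orient c x).1, !(orient c x).2) := by
  unfold orient
  rcases (hfp x).lt_or_gt with h | h <;> simp [hinv x, h, h.not_gt]

omit hfp in
theorem orient_injective : Function.Injective (orient c) := by
  intro x y hxy
  unfold orient at hxy
  split_ifs at hxy <;>
    simp only [Prod.mk.injEq, Bool.false_eq_true, Bool.true_eq_false, and_false, and_true] at hxy
  · exact hxy
  · exact hinv.injective hxy

theorem RedStep.step_map_orient {w w' : List α} (h : RedStep c w w') :
    FreeGroup.Red.Step (w.map (orient c)) (w'.map (orient c)) := by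
  obtain ⟨W₁, W₂, a, rfl, rfl⟩ := h
  simp only [List.map_append, List.map_cons, orient_apply hinv hfp]
  exact FreeGroup.Red.Step.not

theorem exists_redStep_of_step_map_orient {w : List α} {M : List (α × Bool)}
    (h : FreeGroup.Red.Step (w.map (orient c)) M) :
    ∃ w', M = w'.map (orient c) ∧ RedStep c w w' := by
  generalize hN : w.map (orient c) = N at h
  obtain ⟨L₁, L₂, x, b⟩ := h
  obtain ⟨W₁, V, rfl, rfl, hV⟩ := List.map_eq_append_iff.1 hN
  obtain ⟨p, V', rfl, hp, hV'⟩ := List.map_eq_cons_iff.1 hV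
  obtain ⟨q, W₂, rfl, hq, rfl⟩ := List.map_eq_cons_iff.1 hV'
  have hqp : q = c p := orient_injective hinv <| by rw [orient_apply hinv hfp, hp, hq]
  exact ⟨W₁ ++ W₂, by rw [List.map_append], W₁, W₂, p, by rw [hqp], rfl⟩

theorem foldable_of_red_map_orient {w : List α} (h : FreeGroup.Red (w.map (orient c)) []) :
    Foldable c w := by
  generalize hN : w.map (orient c) = N at h
  induction h using Relation.ReflTransGen.head_induction_on generalizing w with
  | refl =>
    rw [List.map_eq_nil_iff.1 hN]
    exact .refl
  | head hstep _ ih =>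
    obtain ⟨w', rfl, hw'⟩ := exists_redStep_of_step_map_orient hinv hfp (hN ▸ hstep)
    exact .head hw' (ih rfl)

theorem foldable_iff_mk_map_orient_eq_one (w : List α) :
    Foldable c w ↔ FreeGroup.mk (w.map (orient c)) = 1 := by
  rw [FreeGroup.one_eq_mk, FreeGroup.Red.exact]
  constructor
  · intro h
    refine ⟨[], ?_, .refl⟩
    exact Relation.ReflTransGen.lift (List.map (orient c))
      (fun _ _ hs => hs.step_map_orient hinv hfp) _ _ h
  · rintro ⟨L, hL, hnil⟩
    rw [FreeGroup.Red.nil_iff.1 hnil] at hL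
    exact foldable_of_red_map_orient hinv hfp hL

end Orient

section Foldable

variable {α : Type*} {c : α → α} (hinv : Function.Involutive c) (hfp : ∀ a, c a ≠ a)
include hinv hfp

theorem foldable_rotate_iff (w : List α) (n : ℕ) : Foldable c (w.rotate n) ↔ Foldable c w := by
  let _ : LinearOrder α := IsWellOrder.linearOrder WellOrderingRel
  rw [foldable_iff_mk_map_orient_eq_one hinv hfp, foldable_iff_mk_map_orient_eq_one hinv hfp,
    List.map_rotate, FreeGroup.mk_rotate_eq_one_iff]

theorem RedStep.foldable_iff {w w' : List α} (h : RedStep c w w') :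
    Foldable c w ↔ Foldable c w' := by
  let _ : LinearOrder α := IsWellOrder.linearOrder WellOrderingRel
  rw [foldable_iff_mk_map_orient_eq_one hinv hfp, foldable_iff_mk_map_orient_eq_one hinv hfp,
    FreeGroup.Red.exact.2 ⟨_, (h.step_map_orient hinv hfp).to_red, .refl⟩]

end Foldable

/-- The rotation `w.rotate s = a :: c a :: u` exhibits the cyclically adjacent complementary
pair, and `u` is the cyclic word after deletion. -/
theorem cyclic_foldable_delete {α : Type*} (c : α → α)
    (hinv : Function.Involutive c) (hfp : ∀ a, c a ≠ a)
    (w u : List α) (a : α) (s : ℕ)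
    (hrot : w.rotate s = a :: c a :: u)
    (hfold : ∃ r, Foldable c (w.rotate r)) :
    ∃ r, Foldable c (u.rotate r) := by
  obtain ⟨r, hr⟩ := hfold
  have hw : Foldable c (w.rotate s) :=
    (foldable_rotate_iff hinv hfp w s).2 ((foldable_rotate_iff hinv hfp w r).1 hr)
  have hdel : RedStep c (a :: c a :: u) u := ⟨[], u, a, rfl, rfl⟩
  refine ⟨0, ?_⟩
  rw [List.rotate_zero, ← hdel.foldable_iff hinv hfp, ← hrot]
  exact hw
end
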